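/- Let (T, m) be a stable marked tree and let f denote forgetting a subset S of markings followed by iterated contraction of unstable vertices. Then the contraction process terminates after at most |V(T)| steps and the result is independent of the order in which unstable vertices are contracted. -/

import Mathlib

/-- A marked tree: a finite tree (vertices a finite set of naturals, edges a
finite set of unordered pairs forming a connected acyclic graph) together with
a marking function counting the marked points on each vertex.  The empty marked
tree is allowed (vertex set empty). -/
structure MarkedTree where
  verts : Finset ℕ
  edges : Finset (Sym2 ℕ)
  mark : ℕ → ℕ
  edge_mem : ∀ e ∈ edges, ∀ v ∈ e, v ∈ verts
  not_diag : ∀ e ∈ edges, ¬ e.IsDiag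
  mark_supp : ∀ v ∉ verts, mark v = 0
  /-- connected with `|E| + 1 = |V|`, i.e. a tree (or the empty graph). -/
  card_eq : verts = ∅ ∨ edges.card + 1 = verts.card
  conn : ∀ v ∈ verts, ∀ w ∈ verts,
    Relation.ReflTransGen (fun a b => s(a, b) ∈ edges) v w

/-- The degree of a vertex in a marked tree. -/
def MarkedTree.deg (T : MarkedTree) (v : ℕ) : ℕ :=
  (T.edges.filter (fun e => v ∈ e)).card

/-- The simple graph underlying a marked tree. -/
def MarkedTree.graph (T : MarkedTree) : SimpleGraph ℕ :=
  SimpleGraph.fromEdgeSet ↑T.edges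

/-- One step of the stabilization process: an unstable vertex `v`
(`deg v + mark v ≤ 2`) is contracted.  If `deg v = 0` the vertex is removed;
if `deg v = 1` it is removed and its markings are transferred to its unique
neighbor; if `deg v = 2` (so `mark v = 0`) it is removed and its two edges are
merged into one. -/
def MarkedTree.Step (T T' : MarkedTree) : Prop :=
  ∃ v ∈ T.verts, T.deg v + T.mark v ≤ 2 ∧ T'.verts = T.verts.erase v ∧
    ((T.deg v = 0 ∧ T'.edges = T.edges ∧ ∀ x, x ≠ v → T'.mark x = T.mark x) ∨
     (T.deg v = 1 ∧ ∃ w ∈ T.verts, w ≠ v ∧ s(v, w) ∈ T.edges ∧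
        T'.edges = T.edges.erase s(v, w) ∧
        T'.mark w = T.mark w + T.mark v ∧
        ∀ x, x ≠ v → x ≠ w → T'.mark x = T.mark x) ∨
     (T.deg v = 2 ∧ ∃ w₁ ∈ T.verts, ∃ w₂ ∈ T.verts, w₁ ≠ w₂ ∧
        s(v, w₁) ∈ T.edges ∧ s(v, w₂) ∈ T.edges ∧
        T'.edges = insert s(w₁, w₂) ((T.edges.erase s(v, w₁)).erase s(v, w₂)) ∧
        ∀ x, x ≠ v → T'.mark x = T.mark x))

/-!
Every step deletes a vertex, so no chain of steps is longer than `|V(T)|`.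

For confluence, observe that a step at a vertex `v` of degree 1 or 2 is the contraction of an edge
`s(v, t)` onto `t`: edges are pushed forward along the retraction `v ↦ t`, dropping the collapsed
one, and the markings of `v` move to `t`. As `T` is a tree (in particular triangle-free), this
loses exactly one edge and again gives a tree, and for degree 2 the result does not depend on the
chosen neighbour. Contractions at distinct vertices `v ≠ w` commute, since the composite
retractions agree, and contracting an edge at `v` does not make any other vertex stable. Hence
any two different steps from `T` can be joined in one step each, except when `T` is a single edge
with two unstable leaves, where both steps lead to a single unstable vertex and then to the empty
tree.
Church–Rosser turns this diamond property into uniqueness of normal forms.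
-/

open Relation Function

theorem Finset.card_le_card_add_one_of_reflTransGen {α : Type*} [DecidableEq α]
    {V : Finset α} {E : Finset (Sym2 α)} (hE : ∀ e ∈ E, ∀ x ∈ e, x ∈ V)
    (hconn : ∀ v ∈ V, ∀ w ∈ V, ReflTransGen (fun a b => s(a, b) ∈ E) v w) :
    V.card ≤ E.card + 1 := by
  rcases V.eq_empty_or_nonempty with rfl | ⟨v₀, hv₀⟩
  · simp
  let G := (SimpleGraph.fromEdgeSet (E : Set (Sym2 α))).induce (V : Set α)
  have hreach (x : V) (y : α) (hxy : ReflTransGen (fun a b => s(a, b) ∈ E) x y) :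
      ∃ hy : y ∈ V, G.Reachable x ⟨y, hy⟩ := by
    induction hxy with
    | refl => exact ⟨x.2, .rfl⟩
    | @tail b c _ hbc ih =>
      obtain ⟨hb, hxb⟩ := ih
      refine ⟨hE _ hbc c (Sym2.mem_mk_right b c), ?_⟩
      rcases eq_or_ne b c with rfl | hne
      · exact hxb
      · exact hxb.trans (SimpleGraph.Adj.reachable (by simpa [G] using And.intro hbc hne))
  have hG : G.Connected :=
    { preconnected := fun x y => (hreach x y (hconn x x.2 y y.2)).2
      nonempty := ⟨⟨v₀, hv₀⟩⟩ }
  have hedges : Nat.card G.edgeSet ≤ E.card := by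
    rw [← Nat.card_eq_finsetCard]
    refine Nat.card_le_card_of_injective (fun e => ⟨e.1.map Subtype.val, ?_⟩) fun e₁ e₂ h => ?_
    · obtain ⟨e, he⟩ := e
      induction e using Sym2.ind with
      | h x y =>
        have hxy : G.Adj x y := he
        simp only [G, SimpleGraph.comap_adj, SimpleGraph.fromEdgeSet_adj] at hxy
        exact hxy.1
    · exact Subtype.ext (Sym2.map.injective Subtype.val_injective (congrArg Subtype.val h))
  have hcard := hG.card_vert_le_card_edgeSet_add_one
  rw [Nat.card_coe_set_eq, Set.ncard_coe_finset] at hcard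
  omega

namespace Finset

variable {α β γ : Type*}

def contractEdges [DecidableEq β] (f : α → β) (E : Finset (Sym2 α)) : Finset (Sym2 β) :=
  (E.image (Sym2.map f)).filter fun e => ¬ e.IsDiag

theorem mk_mem_contractEdges [DecidableEq β] {f : α → β} {E : Finset (Sym2 α)} {a b : α}
    (h : s(a, b) ∈ E) (hne : f a ≠ f b) : s(f a, f b) ∈ contractEdges f E :=
  mem_filter.mpr ⟨mem_image.mpr ⟨_, h, Sym2.map_mk _ _ _⟩, by simpa using hne⟩

theorem contractEdges_contractEdges [DecidableEq β] [DecidableEq γ] (f : α → β) (g : β → γ)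
    (E : Finset (Sym2 α)) : contractEdges g (contractEdges f E) = contractEdges (g ∘ f) E := by
  ext e
  simp only [contractEdges, mem_filter, mem_image, ← Sym2.map_map]
  constructor
  · rintro ⟨⟨e', ⟨⟨e'', he'', rfl⟩, -⟩, rfl⟩, hdiag⟩
    exact ⟨⟨e'', he'', rfl⟩, hdiag⟩
  · rintro ⟨⟨e'', he'', rfl⟩, hdiag⟩
    exact ⟨⟨_, ⟨⟨e'', he'', rfl⟩, fun h => hdiag (h.map)⟩, rfl⟩, hdiag⟩

theorem reflTransGen_contractEdges [DecidableEq β] (f : α → β) {E : Finset (Sym2 α)} {x y : α}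
    (h : ReflTransGen (fun a b => s(a, b) ∈ E) x y) :
    ReflTransGen (fun a b => s(a, b) ∈ contractEdges f E) (f x) (f y) := by
  refine ReflTransGen.lift' f (fun a b hab => ?_) _ _ h
  by_cases hf : f a = f b
  · show ReflTransGen _ (f a) (f b)
    rw [hf]
  · exact .single (mk_mem_contractEdges hab hf)

end Finset

theorem Function.update_id_comp_update_id {α : Type*} [DecidableEq α] {v w s t : α}
    (hvw : v ≠ w) (hsv : s ≠ v) :
    update id w s ∘ update id v t = update id v (update id w s t) ∘ update id w s := by
  funext x
  simp only [comp_apply, update_apply, id]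
  split_ifs <;> simp_all

theorem Sym2.map_update_id_of_notMem {α : Type*} [DecidableEq α] {v t : α} {e : Sym2 α}
    (hv : v ∉ e) : e.map (update id v t) = e := by
  induction e using Sym2.ind with
  | h a b =>
    simp only [Sym2.mem_iff, not_or] at hv
    simp [update_apply, Ne.symm hv.1, Ne.symm hv.2]

theorem Finset.image_map_update_id_of_forall_notMem {α : Type*} [DecidableEq α] {v t : α}
    {F : Finset (Sym2 α)} (hF : ∀ e ∈ F, v ∉ e) :
    F.image (Sym2.map (update id v t)) = F := by
  rw [Finset.image_congr fun e he => Sym2.map_update_id_of_notMem (hF e he), Finset.image_id']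

theorem Sym2.mem_map_update_id_iff {α : Type*} [DecidableEq α] {v t x : α} {e : Sym2 α}
    (hxv : x ≠ v) : x ∈ e.map (update id v t) ↔ x ∈ e ∨ x = t ∧ v ∈ e := by
  simp only [Sym2.mem_map, update_apply, id]
  constructor
  · rintro ⟨y, hy, hyx⟩
    split_ifs at hyx with hyv
    · exact .inr ⟨hyx.symm, hyv ▸ hy⟩
    · exact .inl (hyx ▸ hy)
  · rintro (hx | ⟨rfl, hv⟩)
    · exact ⟨x, hx, if_neg hxv⟩
    · exact ⟨v, hv, if_pos rfl⟩

namespace MarkedTree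

def moveMark {α M : Type*} [DecidableEq α] [AddCommMonoid M] (m : α → M) (v t : α) : α → M :=
  fun x => if x = v then 0 else if x = t then m t + m v else m x

theorem moveMark_moveMark {α M : Type*} [DecidableEq α] [AddCommMonoid M] (m : α → M)
    {v w s t : α} (hvw : v ≠ w) (hsv : s ≠ v) (htv : t ≠ v) (hsw : s ≠ w) :
    moveMark (moveMark m v t) w s = moveMark (moveMark m w s) v (update id w s t) := by
  funext x
  simp only [moveMark, update_apply, id]
  split_ifs <;> subst_vars <;> simp_all [add_comm, add_left_comm]

variable {T A B : MarkedTree} {e : Sym2 ℕ} {a b v w t u x : ℕ}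

theorem ext (hv : A.verts = B.verts) (he : A.edges = B.edges) (hm : A.mark = B.mark) : A = B := by
  cases A; cases B; congr

theorem ne_of_mk_mem_edges (h : s(a, b) ∈ T.edges) : a ≠ b :=
  fun hab => T.not_diag _ h (Sym2.mk_isDiag_iff.mpr hab)

theorem left_mem_verts (h : s(a, b) ∈ T.edges) : a ∈ T.verts :=
  T.edge_mem _ h a (Sym2.mem_mk_left a b)

theorem right_mem_verts (h : s(a, b) ∈ T.edges) : b ∈ T.verts :=
  T.edge_mem _ h b (Sym2.mem_mk_right a b)

theorem card_edges_add_one (hv : v ∈ T.verts) : T.edges.card + 1 = T.verts.card :=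
  T.card_eq.resolve_left (Finset.ne_empty_of_mem hv)

/-- An edge of a tree is a bridge: otherwise the remaining `|E| - 1` edges would still connect
all `|E| + 1` vertices. -/
theorem not_reflTransGen_erase (h : s(a, b) ∈ T.edges) :
    ¬ ReflTransGen (fun x y => s(x, y) ∈ T.edges.erase s(a, b)) a b := by
  intro hab
  have hba : ReflTransGen (fun x y => s(x, y) ∈ T.edges.erase s(a, b)) b a := by
    have : Std.Symm fun x y => s(x, y) ∈ T.edges.erase s(a, b) :=
      ⟨fun x y h => by rwa [Sym2.eq_swap (a := y)]⟩
    exact Std.Symm.symm _ _ hab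
  have hconn : ∀ x ∈ T.verts, ∀ y ∈ T.verts,
      ReflTransGen (fun x y => s(x, y) ∈ T.edges.erase s(a, b)) x y := by
    refine fun x hx y hy => reflTransGen_closed (fun p q hpq => ?_) _ _ (T.conn x hx y hy)
    by_cases hpq' : s(p, q) = s(a, b)
    · rcases Sym2.eq_iff.mp hpq' with ⟨rfl, rfl⟩ | ⟨rfl, rfl⟩
      exacts [hab, hba]
    · exact .single (Finset.mem_erase.mpr ⟨hpq', hpq⟩)
  have hcard := Finset.card_le_card_add_one_of_reflTransGen
    (fun e he => T.edge_mem e (Finset.mem_of_mem_erase he)) hconn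
  rw [Finset.card_erase_of_mem h, ← card_edges_add_one (left_mem_verts h)] at hcard
  have := Finset.card_pos.mpr ⟨_, h⟩
  omega

theorem mk_notMem_edges_of_common_neighbor (ha : s(v, a) ∈ T.edges) (hb : s(v, b) ∈ T.edges) :
    s(a, b) ∉ T.edges := by
  intro hab
  have hva := ne_of_mk_mem_edges ha
  have hvb := ne_of_mk_mem_edges hb
  refine not_reflTransGen_erase hab (ReflTransGen.single (b := v) ?_ |>.tail ?_)
  · refine Finset.mem_erase.mpr ⟨fun h => ?_, Sym2.eq_swap ▸ ha⟩
    rcases Sym2.eq_iff.mp h with ⟨-, h⟩ | ⟨h, -⟩ <;> simp_all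
  · refine Finset.mem_erase.mpr ⟨fun h => ?_, hb⟩
    rcases Sym2.eq_iff.mp h with ⟨h, -⟩ | ⟨h, -⟩ <;> simp_all

def incident (T : MarkedTree) (v : ℕ) : Finset (Sym2 ℕ) :=
  T.edges.filter (v ∈ ·)

theorem mem_incident : e ∈ T.incident v ↔ e ∈ T.edges ∧ v ∈ e :=
  Finset.mem_filter

theorem card_incident : (T.incident v).card = T.deg v :=
  rfl

theorem mk_mem_incident (h : s(v, t) ∈ T.edges) : s(v, t) ∈ T.incident v :=
  mem_incident.mpr ⟨h, Sym2.mem_mk_left v t⟩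

theorem deg_pos (h : s(v, t) ∈ T.edges) : 0 < T.deg v :=
  Finset.card_pos.mpr ⟨_, mk_mem_incident h⟩

theorem incident_eq_singleton (hdeg : T.deg v = 1) (h : s(v, t) ∈ T.edges) :
    T.incident v = {s(v, t)} :=
  (Finset.eq_singleton_iff_unique_mem.mpr
    ⟨mk_mem_incident h, fun _ he => Finset.card_le_one.mp hdeg.le _ he _ (mk_mem_incident h)⟩)

theorem two_le_deg (ht : s(v, t) ∈ T.edges) (hu : s(v, u) ∈ T.edges) (htu : t ≠ u) :
    2 ≤ T.deg v := by
  rw [← card_incident, ← Finset.card_pair (mt Sym2.congr_right.mp htu)]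
  exact Finset.card_le_card (Finset.insert_subset (mk_mem_incident ht)
    (Finset.singleton_subset_iff.mpr (mk_mem_incident hu)))

theorem incident_eq_pair (hdeg : T.deg v = 2) (ht : s(v, t) ∈ T.edges) (hu : s(v, u) ∈ T.edges)
    (htu : t ≠ u) : T.incident v = {s(v, t), s(v, u)} :=
  (Finset.eq_of_subset_of_card_le (Finset.insert_subset (mk_mem_incident ht)
    (Finset.singleton_subset_iff.mpr (mk_mem_incident hu)))
    (by rw [Finset.card_pair (mt Sym2.congr_right.mp htu), card_incident, hdeg])).symm

theorem exists_ne_mk_mem_edges (hdeg : T.deg v = 2) (ht : s(v, t) ∈ T.edges) :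
    ∃ u ≠ t, s(v, u) ∈ T.edges := by
  obtain ⟨e, he⟩ : ((T.incident v).erase s(v, t)).Nonempty := by
    rw [← Finset.card_pos, Finset.card_erase_of_mem (mk_mem_incident ht), card_incident, hdeg]
    norm_num
  obtain ⟨hne, he⟩ := Finset.mem_erase.mp he
  obtain ⟨heT, hv⟩ := mem_incident.mp he
  obtain ⟨u, rfl⟩ := Sym2.mem_iff_exists.mp hv
  exact ⟨u, fun hut => hne (hut ▸ rfl), heT⟩

theorem verts_eq_singleton_of_deg_eq_zero (hv : v ∈ T.verts) (hdeg : T.deg v = 0) :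
    T.verts = {v} := by
  refine Finset.eq_singleton_iff_unique_mem.mpr ⟨hv, fun x hx => ?_⟩
  rcases (T.conn v hv x hx).cases_head with rfl | ⟨c, hc, -⟩
  · rfl
  · exact absurd hdeg (deg_pos hc).ne'

theorem edges_eq_empty_of_verts_eq_singleton (h : T.verts = {v}) : T.edges = ∅ := by
  refine Finset.eq_empty_of_forall_notMem fun e he => ?_
  induction e using Sym2.ind with
  | h a b =>
    have ha := left_mem_verts he
    have hb := right_mem_verts he
    rw [h, Finset.mem_singleton] at ha hb
    exact ne_of_mk_mem_edges he (ha.trans hb.symm)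

def empty : MarkedTree :=
  ⟨∅, ∅, 0, by simp, by simp, fun _ _ => rfl, Or.inl rfl, by simp⟩

theorem eq_empty_of_verts_eq_empty (h : T.verts = ∅) : T = empty := by
  refine ext h (Finset.eq_empty_of_forall_notMem fun e he => ?_) (funext fun x => ?_)
  · induction e using Sym2.ind with
    | h a b => simpa [h] using left_mem_verts he
  · exact T.mark_supp x (by simp [h])

theorem map_update_of_mem_erase (h : s(v, t) ∈ T.edges) (he : e ∈ T.edges.erase s(v, t)) :
    (v ∉ e ∧ e.map (update id v t) = e) ∨
      ∃ a ≠ t, e = s(v, a) ∧ e.map (update id v t) = s(t, a) ∧ s(t, a) ∉ T.edges := by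
  obtain ⟨hne, he⟩ := Finset.mem_erase.mp he
  by_cases hv : v ∈ e
  · obtain ⟨a, rfl⟩ := Sym2.mem_iff_exists.mp hv
    have hva := ne_of_mk_mem_edges he
    refine .inr ⟨a, fun hat => hne (hat ▸ rfl), rfl, ?_, mk_notMem_edges_of_common_neighbor h he⟩
    simp [update_apply, hva.symm]
  · exact .inl ⟨hv, Sym2.map_update_id_of_notMem hv⟩

theorem not_isDiag_map_update (h : s(v, t) ∈ T.edges) (he : e ∈ T.edges.erase s(v, t)) :
    ¬ (e.map (update id v t)).IsDiag := by
  rcases map_update_of_mem_erase h he with ⟨-, hmap⟩ | ⟨a, hat, -, hmap, -⟩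
  · rw [hmap]
    exact T.not_diag e (Finset.mem_of_mem_erase he)
  · rw [hmap, Sym2.mk_isDiag_iff]
    exact hat.symm

theorem injOn_map_update (h : s(v, t) ∈ T.edges) :
    Set.InjOn (Sym2.map (update id v t)) (T.edges.erase s(v, t)) := by
  intro e₁ he₁ e₂ he₂ heq
  rcases map_update_of_mem_erase h he₁ with ⟨-, h₁⟩ | ⟨a, -, rfl, h₁, ha⟩ <;>
    rcases map_update_of_mem_erase h he₂ with ⟨-, h₂⟩ | ⟨b, -, rfl, h₂, hb⟩ <;>
    rw [h₁, h₂] at heq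
  · exact heq
  · exact absurd (heq ▸ Finset.mem_of_mem_erase he₁) hb
  · exact absurd (heq ▸ Finset.mem_of_mem_erase he₂) ha
  · rw [Sym2.congr_right.mp heq]

theorem contractEdges_update_eq_image_erase (h : s(v, t) ∈ T.edges) :
    Finset.contractEdges (update id v t) T.edges =
      (T.edges.erase s(v, t)).image (Sym2.map (update id v t)) := by
  ext e
  simp only [Finset.contractEdges, Finset.mem_filter, Finset.mem_image]
  constructor
  · rintro ⟨⟨e', he', rfl⟩, hdiag⟩
    refine ⟨e', Finset.mem_erase.mpr ⟨?_, he'⟩, rfl⟩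
    rintro rfl
    simp [update_apply] at hdiag
  · rintro ⟨e', he', rfl⟩
    exact ⟨⟨e', Finset.mem_of_mem_erase he', rfl⟩, not_isDiag_map_update h he'⟩

theorem card_contractEdges_update (h : s(v, t) ∈ T.edges) :
    (Finset.contractEdges (update id v t) T.edges).card + 1 = T.edges.card := by
  rw [contractEdges_update_eq_image_erase h, Finset.card_image_of_injOn (injOn_map_update h),
    Finset.card_erase_add_one h]

def contract (T : MarkedTree) (v t : ℕ) (h : s(v, t) ∈ T.edges) : MarkedTree where
  verts := T.verts.erase v
  edges := Finset.contractEdges (update id v t) T.edges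
  mark := moveMark T.mark v t
  edge_mem := by
    intro e he x hx
    obtain ⟨⟨e', he', rfl⟩, -⟩ : (∃ e' ∈ T.edges, e'.map (update id v t) = e) ∧ _ := by
      simpa [Finset.contractEdges] using he
    obtain ⟨y, hy, rfl⟩ := Sym2.mem_map.mp hx
    rw [update_apply]
    split_ifs with hyv
    · exact Finset.mem_erase.mpr ⟨(ne_of_mk_mem_edges h).symm, right_mem_verts h⟩
    · exact Finset.mem_erase.mpr ⟨hyv, T.edge_mem e' he' y hy⟩
  not_diag := fun e he => (Finset.mem_filter.mp he).2
  mark_supp := by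
    intro x hx
    simp only [moveMark]
    split_ifs with hxv hxt
    · rfl
    · exact absurd (hxt ▸ right_mem_verts h) (by simpa [hxv] using hx)
    · exact T.mark_supp x (by simpa [hxv] using hx)
  card_eq := by
    refine .inr ?_
    have := card_edges_add_one (left_mem_verts h)
    have := card_contractEdges_update h
    rw [Finset.card_erase_of_mem (left_mem_verts h)]
    omega
  conn := by
    intro x hx y hy
    simpa [update_of_ne (Finset.ne_of_mem_erase hx), update_of_ne (Finset.ne_of_mem_erase hy)]
      using Finset.reflTransGen_contractEdges (update id v t)
        (T.conn x (Finset.mem_of_mem_erase hx) y (Finset.mem_of_mem_erase hy))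

theorem deg_contract (h : s(v, t) ∈ T.edges) (x : ℕ) :
    (T.contract v t h).deg x =
      ((T.edges.erase s(v, t)).filter fun e => x ∈ e.map (update id v t)).card := by
  rw [← card_incident, incident, show (T.contract v t h).edges = _ from
    contractEdges_update_eq_image_erase h, Finset.filter_image,
    Finset.card_image_of_injOn ((injOn_map_update h).mono (Finset.coe_subset.mpr
      (Finset.filter_subset _ _)))]

theorem deg_contract_of_ne (h : s(v, t) ∈ T.edges) (hxv : x ≠ v) (hxt : x ≠ t) :
    (T.contract v t h).deg x = T.deg x := by
  simp only [deg_contract, Sym2.mem_map_update_id_iff hxv, hxt, false_and, or_false]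
  rw [Finset.filter_erase, Finset.erase_eq_of_notMem (by simp [hxv, hxt])]
  rfl

theorem deg_contract_self (h : s(v, t) ∈ T.edges) :
    (T.contract v t h).deg t + 2 = T.deg t + T.deg v := by
  have htv := (ne_of_mk_mem_edges h).symm
  have hinter : T.incident t ∩ T.incident v = {s(v, t)} := by
    ext e
    rw [Finset.mem_inter, mem_incident, mem_incident, Finset.mem_singleton]
    constructor
    · rintro ⟨⟨-, ht⟩, -, hv⟩
      exact (Sym2.mem_and_mem_iff htv.symm).mp ⟨hv, ht⟩
    · rintro rfl
      simp [h]
  have hmem : s(v, t) ∈ T.incident t ∪ T.incident v :=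
    Finset.mem_union_right _ (mk_mem_incident h)
  have hunion := Finset.card_union_add_card_inter (T.incident t) (T.incident v)
  simp only [deg_contract, Sym2.mem_map_update_id_iff htv, true_and]
  rw [Finset.filter_erase, Finset.filter_or, ← incident, ← incident,
    Finset.card_erase_of_mem hmem, ← card_incident, ← card_incident, ← hunion, hinter,
    Finset.card_singleton]
  have := Finset.card_pos.mpr ⟨_, hmem⟩
  omega

theorem mark_contract_self (h : s(v, t) ∈ T.edges) :
    (T.contract v t h).mark t = T.mark t + T.mark v :=
  if_neg (ne_of_mk_mem_edges h).symm |>.trans (if_pos rfl)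

theorem mark_contract_of_ne (h : s(v, t) ∈ T.edges) (hxv : x ≠ v) (hxt : x ≠ t) :
    (T.contract v t h).mark x = T.mark x :=
  if_neg hxv |>.trans (if_neg hxt)

theorem deg_add_mark_contract_le (h : s(v, t) ∈ T.edges) (hv : T.deg v + T.mark v ≤ 2)
    (hxv : x ≠ v) : (T.contract v t h).deg x + (T.contract v t h).mark x ≤ T.deg x + T.mark x := by
  rcases eq_or_ne x t with rfl | hxt
  · have := deg_contract_self h
    have := deg_pos h
    rw [mark_contract_self h]
    omega
  · rw [deg_contract_of_ne h hxv hxt, mark_contract_of_ne h hxv hxt]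

theorem mk_mem_edges_contract (h : s(v, t) ∈ T.edges) (hab : s(a, b) ∈ T.edges)
    (hne : update id v t a ≠ update id v t b) :
    s(update id v t a, update id v t b) ∈ (T.contract v t h).edges :=
  Finset.mk_mem_contractEdges hab hne

theorem edges_contract_of_deg_eq_one (hdeg : T.deg v = 1) (h : s(v, t) ∈ T.edges) :
    (T.contract v t h).edges = T.edges.erase s(v, t) := by
  refine (contractEdges_update_eq_image_erase h).trans
    (Finset.image_map_update_id_of_forall_notMem fun e he hv => ?_)
  obtain ⟨hne, he⟩ := Finset.mem_erase.mp he
  have := incident_eq_singleton hdeg h ▸ mem_incident.mpr ⟨he, hv⟩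
  exact hne (Finset.mem_singleton.mp this)

theorem edges_contract_of_deg_eq_two (hdeg : T.deg v = 2) (h : s(v, t) ∈ T.edges)
    (hu : s(v, u) ∈ T.edges) (htu : t ≠ u) :
    (T.contract v t h).edges = insert s(t, u) ((T.edges.erase s(v, t)).erase s(v, u)) := by
  have hu' : s(v, u) ∈ T.edges.erase s(v, t) :=
    Finset.mem_erase.mpr ⟨mt Sym2.congr_right.mp htu.symm, hu⟩
  rw [show (T.contract v t h).edges = _ from contractEdges_update_eq_image_erase h,
    ← Finset.insert_erase hu', Finset.image_insert, Finset.image_map_update_id_of_forall_notMem]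
  · simp [update_apply, (ne_of_mk_mem_edges hu).symm]
  · intro e he hv
    obtain ⟨hneu, hnet, he⟩ := by simpa only [Finset.mem_erase] using he
    have := incident_eq_pair hdeg h hu htu ▸ mem_incident.mpr ⟨he, hv⟩
    simp_all

theorem step_contract (hv : T.deg v + T.mark v ≤ 2) (h : s(v, t) ∈ T.edges) :
    T.Step (T.contract v t h) := by
  refine ⟨v, left_mem_verts h, hv, rfl, ?_⟩
  have htv := (ne_of_mk_mem_edges h).symm
  obtain hdeg | hdeg : T.deg v = 1 ∨ T.deg v = 2 := by have := deg_pos h; omega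
  · exact .inr (.inl ⟨hdeg, t, right_mem_verts h, htv, h, edges_contract_of_deg_eq_one hdeg h,
      mark_contract_self h, fun x hxv hxt => mark_contract_of_ne h hxv hxt⟩)
  · obtain ⟨u, hut, hu⟩ := exists_ne_mk_mem_edges hdeg h
    refine .inr (.inr ⟨hdeg, t, right_mem_verts h, u, right_mem_verts hu, hut.symm, h, hu,
      edges_contract_of_deg_eq_two hdeg h hu hut.symm, fun x hxv => ?_⟩)
    rcases eq_or_ne x t with rfl | hxt
    · rw [mark_contract_self h]
      omega
    · exact mark_contract_of_ne h hxv hxt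

theorem step_empty (hv : v ∈ T.verts) (hdeg : T.deg v = 0) (hm : T.mark v ≤ 2) :
    T.Step empty := by
  have hV := verts_eq_singleton_of_deg_eq_zero hv hdeg
  refine ⟨v, hv, by omega, by simp [empty, hV], .inl ⟨hdeg,
    (edges_eq_empty_of_verts_eq_singleton hV).symm, fun x hx => ?_⟩⟩
  exact (T.mark_supp x (by simp [hV, hx])).symm

theorem ext_of_mark_eqOn (hv : A.verts = B.verts) (he : A.edges = B.edges)
    (hm : ∀ x ∈ A.verts, A.mark x = B.mark x) : A = B := by
  refine ext hv he (funext fun x => ?_)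
  by_cases hx : x ∈ A.verts
  · exact hm x hx
  · rw [A.mark_supp x hx, B.mark_supp x (hv ▸ hx)]

theorem Step.eq_empty_or_eq_contract (hA : T.Step A) :
    (∃ v, T.verts = {v} ∧ A = empty) ∨
      ∃ v t, ∃ h : s(v, t) ∈ T.edges, T.deg v + T.mark v ≤ 2 ∧ A = T.contract v t h := by
  obtain ⟨v, hv, hunst, hverts, ⟨hdeg, -⟩ | ⟨hdeg, w, -, -, h, hedges, hmw, hmark⟩ |
    ⟨hdeg, w, -, u, -, hwu, h, hu, hedges, hmark⟩⟩ := hA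
  · have hV := verts_eq_singleton_of_deg_eq_zero hv hdeg
    exact .inl ⟨v, hV, eq_empty_of_verts_eq_empty (by simp [hverts, hV])⟩
  · refine .inr ⟨v, w, h, hunst, ext_of_mark_eqOn hverts
      (hedges.trans (edges_contract_of_deg_eq_one hdeg h).symm) fun x hx => ?_⟩
    have hxv := Finset.ne_of_mem_erase (hverts ▸ hx)
    rcases eq_or_ne x w with rfl | hxw
    · rw [hmw, mark_contract_self h]
    · rw [hmark x hxv hxw, mark_contract_of_ne h hxv hxw]
  · refine .inr ⟨v, w, h, hunst, ext_of_mark_eqOn hverts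
      (hedges.trans (edges_contract_of_deg_eq_two hdeg h hu hwu).symm) fun x hx => ?_⟩
    have hxv := Finset.ne_of_mem_erase (hverts ▸ hx)
    rcases eq_or_ne x w with rfl | hxw
    · rw [hmark x hxv, mark_contract_self h]
      omega
    · rw [hmark x hxv, mark_contract_of_ne h hxv hxw]

theorem contract_eq_contract (hv : T.deg v + T.mark v ≤ 2) (ht : s(v, t) ∈ T.edges)
    (hu : s(v, u) ∈ T.edges) : T.contract v t ht = T.contract v u hu := by
  rcases eq_or_ne t u with rfl | htu
  · rfl
  have hdeg : T.deg v = 2 := by have := two_le_deg ht hu htu; omega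
  have hm : T.mark v = 0 := by omega
  refine ext rfl ?_ (funext fun x => ?_)
  · rw [edges_contract_of_deg_eq_two hdeg ht hu htu, edges_contract_of_deg_eq_two hdeg hu ht
      htu.symm, Sym2.eq_swap, Finset.erase_right_comm]
  · show moveMark T.mark v t x = moveMark T.mark v u x
    simp only [moveMark, hm, add_zero]
    split_ifs <;> simp_all

theorem contract_contract (hvw : v ≠ w) (huv : u ≠ v) (h : s(v, t) ∈ T.edges)
    (h' : s(w, u) ∈ T.edges) (h₁ : s(w, u) ∈ (T.contract v t h).edges)
    (h₂ : s(v, update id w u t) ∈ (T.contract w u h').edges) :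
    (T.contract v t h).contract w u h₁ = (T.contract w u h').contract v (update id w u t) h₂ := by
  refine ext Finset.erase_right_comm ?_ ?_
  · show Finset.contractEdges _ (Finset.contractEdges _ _) =
      Finset.contractEdges _ (Finset.contractEdges _ _)
    rw [Finset.contractEdges_contractEdges, Finset.contractEdges_contractEdges,
      update_id_comp_update_id hvw huv]
  · exact moveMark_moveMark T.mark hvw huv (ne_of_mk_mem_edges h).symm
      (ne_of_mk_mem_edges h').symm

theorem join_contract_of_ne (hvw : v ≠ w) (huv : u ≠ v) (hv : T.deg v + T.mark v ≤ 2)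
    (hw : T.deg w + T.mark w ≤ 2) (h : s(v, t) ∈ T.edges) (h' : s(w, u) ∈ T.edges) :
    ∃ C, (T.contract v t h).Step C ∧ (T.contract w u h').Step C := by
  have hwu := ne_of_mk_mem_edges h'
  have h₁ : s(w, u) ∈ (T.contract v t h).edges := by
    simpa [update_of_ne hvw.symm, update_of_ne huv] using
      mk_mem_edges_contract h h' (by simpa [update_of_ne hvw.symm, update_of_ne huv] using hwu)
  have h₂ : s(v, update id w u t) ∈ (T.contract w u h').edges := by
    have htv := (ne_of_mk_mem_edges h).symm
    simpa [update_of_ne hvw] using mk_mem_edges_contract h' h (by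
      simp only [update_apply, id, if_neg hvw]
      split_ifs <;> omega)
  refine ⟨_, step_contract ?_ h₁, contract_contract hvw huv h h' h₁ h₂ ▸ step_contract ?_ h₂⟩
  · have := deg_add_mark_contract_le h hv hvw.symm
    omega
  · have := deg_add_mark_contract_le h' hw hvw
    omega

theorem deg_le_one_of_forall (hv : ∀ t, s(v, t) ∈ T.edges → t = w) : T.deg v ≤ 1 := by
  refine Finset.card_le_one.mpr fun e₁ he₁ e₂ he₂ => ?_
  obtain ⟨he₁, hv₁⟩ := mem_incident.mp he₁
  obtain ⟨he₂, hv₂⟩ := mem_incident.mp he₂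
  obtain ⟨a, rfl⟩ := Sym2.mem_iff_exists.mp hv₁
  obtain ⟨b, rfl⟩ := Sym2.mem_iff_exists.mp hv₂
  rw [hv a he₁, hv b he₂]

theorem contract_step_empty (hv : T.deg v + T.mark v ≤ 2) (hw : T.deg w + T.mark w ≤ 2)
    (h : s(v, w) ∈ T.edges) (hvdeg : T.deg v ≤ 1) (hwdeg : T.deg w ≤ 1) :
    (T.contract v w h).Step empty := by
  have := deg_contract_self h
  have := deg_pos h
  have := deg_pos (Sym2.eq_swap ▸ h : s(w, v) ∈ T.edges)
  refine step_empty (Finset.mem_erase.mpr ⟨(ne_of_mk_mem_edges h).symm, right_mem_verts h⟩)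
    (by omega) ?_
  rw [mark_contract_self h]
  omega

theorem join_contract (hv : T.deg v + T.mark v ≤ 2) (hw : T.deg w + T.mark w ≤ 2)
    (h : s(v, t) ∈ T.edges) (h' : s(w, u) ∈ T.edges) :
    T.contract v t h = T.contract w u h' ∨
      ∃ C, (T.contract v t h).Step C ∧ (T.contract w u h').Step C := by
  rcases eq_or_ne v w with rfl | hvw
  · exact .inl (contract_eq_contract hv h h')
  refine .inr ?_
  by_cases hw' : ∃ u', s(w, u') ∈ T.edges ∧ u' ≠ v
  · obtain ⟨u', hu', hu'v⟩ := hw'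
    rw [contract_eq_contract hw h' hu']
    exact join_contract_of_ne hvw hu'v hv hw h hu'
  by_cases hv' : ∃ t', s(v, t') ∈ T.edges ∧ t' ≠ w
  · obtain ⟨t', ht', ht'w⟩ := hv'
    rw [contract_eq_contract hv h ht']
    obtain ⟨C, hC₁, hC₂⟩ := join_contract_of_ne hvw.symm ht'w hw hv h' ht'
    exact ⟨C, hC₂, hC₁⟩
  -- `v` and `w` are adjacent leaves
  simp only [not_exists, not_and, not_not] at hv' hw'
  obtain rfl := hv' t h
  obtain rfl := hw' u h'
  exact ⟨empty, contract_step_empty hv hw h (deg_le_one_of_forall hv')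
    (deg_le_one_of_forall hw'), contract_step_empty hw hv h' (deg_le_one_of_forall hw')
    (deg_le_one_of_forall hv')⟩

theorem Step.join (hA : T.Step A) (hB : T.Step B) : A = B ∨ ∃ C, A.Step C ∧ B.Step C := by
  rcases hA.eq_empty_or_eq_contract with ⟨v, hV, rfl⟩ | ⟨v, t, h, hv, rfl⟩ <;>
    rcases hB.eq_empty_or_eq_contract with ⟨w, hW, rfl⟩ | ⟨w, u, h', hw, rfl⟩
  · exact .inl rfl
  · simp [edges_eq_empty_of_verts_eq_singleton hV] at h'
  · simp [edges_eq_empty_of_verts_eq_singleton hW] at h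
  · exact join_contract hv hw h h'

theorem Step.card_verts (hA : T.Step A) : A.verts.card + 1 = T.verts.card := by
  obtain ⟨v, hv, -, hverts, -⟩ := hA
  rw [hverts, Finset.card_erase_add_one hv]

end MarkedTree

theorem chain_length_le {α : Type*} {r : α → α → Prop} (μ : α → ℕ)
    (hμ : ∀ a b, r a b → μ b < μ a) {k : ℕ} {seq : ℕ → α}
    (hseq : ∀ i < k, r (seq i) (seq (i + 1))) : k ≤ μ (seq 0) := by
  suffices ∀ i ≤ k, μ (seq i) + i ≤ μ (seq 0) by
    have := this k le_rfl
    omega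
  intro i hi
  induction i with
  | zero => simp
  | succ i ih =>
    have := hμ _ _ (hseq i (by omega))
    have := ih (by omega)
    omega

theorem Relation.ReflTransGen.eq_of_forall_not {α : Type*} {r : α → α → Prop} {a b : α}
    (h : ReflTransGen r a b) (ha : ∀ c, ¬ r a c) : b = a := by
  rcases h.cases_head with rfl | ⟨c, hc, -⟩
  · rfl
  · exact absurd hc (ha c)

/-- The stabilization process (iterated contraction of unstable vertices after
forgetting a set of markings) terminates after at most `|V(T)|` steps, and its
result is independent of the order in which unstable vertices are contracted:
any two normal forms reachable from `T` coincide. -/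
theorem stmt_15 (T : MarkedTree) :
    (∀ (k : ℕ) (seq : ℕ → MarkedTree), seq 0 = T →
        (∀ i < k, MarkedTree.Step (seq i) (seq (i + 1))) → k ≤ T.verts.card) ∧
    (∀ A B : MarkedTree,
        Relation.ReflTransGen MarkedTree.Step T A →
        Relation.ReflTransGen MarkedTree.Step T B →
        (∀ A', ¬ MarkedTree.Step A A') → (∀ B', ¬ MarkedTree.Step B B') →
        A = B) := by
  refine ⟨fun k seq h0 hseq => h0 ▸ chain_length_le (fun A => A.verts.card)
    (fun _ _ h => by have := h.card_verts; omega) hseq, fun A B hA hB hnA hnB => ?_⟩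
  have hjoin : ∀ a b c, MarkedTree.Step a b → MarkedTree.Step a c →
      ∃ d, ReflGen MarkedTree.Step b d ∧ ReflTransGen MarkedTree.Step c d := by
    intro a b c hb hc
    rcases hb.join hc with rfl | ⟨d, hbd, hcd⟩
    · exact ⟨b, .refl, .refl⟩
    · exact ⟨d, .single hbd, .single hcd⟩
  obtain ⟨D, hAD, hBD⟩ := church_rosser hjoin hA hB
  exact (hAD.eq_of_forall_not hnA).symm.trans (hBD.eq_of_forall_not hnB)
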